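/- Let E ⊂ ℂ be compact and assume E ∈ 𝒜ℳ(M,m), i.e. ‖P'‖_E ≤ M (deg P)^m ‖P‖_E for all polynomials P, with M > 0, m ≥ 1. Then for every n ≥ 2, v_n(E,1) ≤ M + (m-1) log n, where v_n(E,r) := (1/n) log φ_n(E,r). -/

import Mathlib

open Polynomial Real

/-- Sup norm of a polynomial on a set `E ⊂ ℂ`. -/
noncomputable def supNorm (E : Set ℂ) (P : Polynomial ℂ) : ℝ :=
  sSup {x : ℝ | ∃ z ∈ E, x = ‖P.eval z‖}

/-- `φ_n(E,r) = sup{ |P(z+ζ)| : z ∈ E, |ζ| ≤ r, deg P ≤ n, ‖P‖_E ≤ 1 }`. -/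
noncomputable def phi (E : Set ℂ) (n : ℕ) (r : ℝ) : ℝ :=
  sSup {x : ℝ | ∃ (P : Polynomial ℂ) (z ζ : ℂ), z ∈ E ∧ ‖ζ‖ ≤ r ∧
    P.natDegree ≤ n ∧ supNorm E P ≤ 1 ∧ x = ‖P.eval (z + ζ)‖}

/-! Around a point of `E`, iterating the Markov inequality bounds the `k`-th Taylor coefficient of
a polynomial `P` of degree `≤ n` with `‖P‖_E ≤ 1` by `(M n^m)^k / k!`, so `|P| ≤ exp (M n)` on the
disk of radius `r₀ = n^{-(m-1)}`. The maximum principle for `u ↦ uⁿ P(1/u)` (the form taken here by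
the subharmonicity of `log |P(ζ)| / n - log |ζ|` near infinity) then lets `|P|` grow at most by the
factor `(1/r₀)ⁿ = n^{(m-1)n}` from that disk to the unit disk. -/

open scoped Nat

def HasMarkovInequality (E : Set ℂ) (M m : ℝ) : Prop :=
  ∀ P : ℂ[X], supNorm E (derivative P) ≤ M * (P.natDegree : ℝ) ^ m * supNorm E P

lemma supNorm_nonneg (E : Set ℂ) (P : ℂ[X]) : 0 ≤ supNorm E P :=
  Real.sSup_nonneg (by rintro _ ⟨z, -, rfl⟩; positivity)

lemma norm_eval_le_supNorm {E : Set ℂ} (hE : IsCompact E) (P : ℂ[X]) {z : ℂ} (hz : z ∈ E) :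
    ‖P.eval z‖ ≤ supNorm E P := by
  obtain ⟨C, hC⟩ := (hE.image_of_continuousOn P.continuous.norm.continuousOn).bddAbove
  exact le_csSup ⟨C, by rintro _ ⟨w, hw, rfl⟩; exact hC ⟨w, hw, rfl⟩⟩ ⟨z, hz, rfl⟩

lemma norm_taylor_coeff (P : ℂ[X]) (z : ℂ) (k : ℕ) :
    ‖(taylor z P).coeff k‖ = ‖(derivative^[k] P).eval z‖ / k ! := by
  rw [taylor_coeff, ← factorial_smul_hasseDeriv, LinearMap.smul_apply, eval_smul, nsmul_eq_mul,
    norm_mul, Complex.norm_natCast]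
  field_simp

lemma norm_eval_add_le_mul_exp (P : ℂ[X]) {z : ℂ} {C a : ℝ} (ha : 0 ≤ a)
    (hP : ∀ k, ‖(derivative^[k] P).eval z‖ ≤ C * a ^ k) (ζ : ℂ) :
    ‖P.eval (z + ζ)‖ ≤ C * exp (a * ‖ζ‖) := by
  have hC : 0 ≤ C := by simpa using (norm_nonneg _).trans (hP 0)
  have htaylor : P.eval (z + ζ) =
      ∑ k ∈ Finset.range (P.natDegree + 1), (taylor z P).coeff k * ζ ^ k := by
    rw [add_comm, ← taylor_eval]
    exact eval_eq_sum_range' (by rw [natDegree_taylor]; omega) _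
  calc ‖P.eval (z + ζ)‖
      ≤ ∑ k ∈ Finset.range (P.natDegree + 1), ‖(derivative^[k] P).eval z‖ / k ! * ‖ζ‖ ^ k := by
        rw [htaylor]
        refine (norm_sum_le _ _).trans_eq ?_
        simp only [norm_mul, norm_pow, norm_taylor_coeff]
    _ ≤ ∑ k ∈ Finset.range (P.natDegree + 1), C * a ^ k / k ! * ‖ζ‖ ^ k := by
        gcongr with k
        exact hP k
    _ = C * ∑ k ∈ Finset.range (P.natDegree + 1), (a * ‖ζ‖) ^ k / k ! := by
        rw [Finset.mul_sum]
        exact Finset.sum_congr rfl fun k _ ↦ by ring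
    _ ≤ C * exp (a * ‖ζ‖) := by
        gcongr
        exact sum_le_exp_of_nonneg (by positivity) _

lemma eval_reflect {K : Type*} [Field K] {P : K[X]} {N : ℕ} (hP : P.natDegree ≤ N) {x : K}
    (hx : x ≠ 0) : (reflect N P).eval x = x ^ N * P.eval x⁻¹ := by
  have := invertibleOfNonzero (inv_ne_zero hx)
  have h := eval₂_reflect_mul_pow (RingHom.id K) x⁻¹ N P hP
  rw [invOf_eq_inv, inv_inv] at h
  simp only [eval]
  rw [← h, inv_pow]
  field_simp

lemma norm_eval_le_mul_div_pow {P : ℂ[X]} {n : ℕ} (hP : P.natDegree ≤ n) {r R A : ℝ}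
    (hr : 0 < r) (hrR : r ≤ R) (hA : ∀ w : ℂ, ‖w‖ ≤ r → ‖P.eval w‖ ≤ A) {w : ℂ} (hw : ‖w‖ ≤ R) :
    ‖P.eval w‖ ≤ A * (R / r) ^ n := by
  have hA0 : 0 ≤ A := (norm_nonneg _).trans (hA 0 (by simpa using hr.le))
  rcases le_or_gt ‖w‖ r with hwr | hwr
  · exact (hA w hwr).trans (le_mul_of_one_le_right hA0 (one_le_pow₀ ((one_le_div hr).2 hrR)))
  have hw0 : w ≠ 0 := norm_pos_iff.1 (hr.trans hwr)
  have hrinv : 0 < r⁻¹ := inv_pos.2 hr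
  have hreflect : ∀ u : ℂ, ‖u‖ ≤ r⁻¹ → ‖(reflect n P).eval u‖ ≤ A * r⁻¹ ^ n := by
    intro u hu
    refine Complex.norm_le_of_forall_mem_frontier_norm_le Metric.isBounded_ball
      (reflect n P).differentiable.diffContOnCl (fun v hv ↦ ?_)
      (by rwa [closure_ball _ hrinv.ne', mem_closedBall_zero_iff])
    rw [frontier_ball _ hrinv.ne', mem_sphere_zero_iff_norm] at hv
    have hv0 : v ≠ 0 := norm_pos_iff.1 (hv ▸ hrinv)
    rw [eval_reflect hP hv0, norm_mul, norm_pow, hv, mul_comm]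
    gcongr
    exact hA _ (by rw [norm_inv, hv, inv_inv])
  calc ‖P.eval w‖ = ‖w‖ ^ n * ‖(reflect n P).eval w⁻¹‖ := by
        rw [eval_reflect hP (inv_ne_zero hw0), inv_inv, norm_mul, norm_pow, norm_inv, ← mul_assoc,
          ← mul_pow, mul_inv_cancel₀ (norm_ne_zero_iff.2 hw0), one_pow, one_mul]
    _ ≤ R ^ n * (A * r⁻¹ ^ n) :=
        mul_le_mul (pow_le_pow_left₀ (norm_nonneg _) hw n)
          (hreflect _ (by rw [norm_inv]; exact inv_anti₀ hr hwr.le)) (norm_nonneg _)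
          (pow_nonneg (hr.le.trans hrR) n)
    _ = A * (R / r) ^ n := by rw [div_eq_mul_inv, mul_pow]; ring

lemma phi_nonneg (E : Set ℂ) (n : ℕ) (r : ℝ) : 0 ≤ phi E n r :=
  Real.sSup_nonneg (by rintro _ ⟨P, z, ζ, -, -, -, -, rfl⟩; positivity)

namespace HasMarkovInequality

variable {E : Set ℂ} {M m : ℝ}

lemma supNorm_iterate_derivative_le (h : HasMarkovInequality E M m) (hM : 0 ≤ M) (hm : 0 ≤ m)
    {P : ℂ[X]} {n : ℕ} (hP : P.natDegree ≤ n) (k : ℕ) :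
    supNorm E (derivative^[k] P) ≤ (M * (n : ℝ) ^ m) ^ k * supNorm E P := by
  induction k with
  | zero => simp
  | succ k ih =>
    have hdeg : ((derivative^[k] P).natDegree : ℝ) ≤ n := by
      exact_mod_cast (natDegree_iterate_derivative P k).trans ((Nat.sub_le _ _).trans hP)
    rw [Function.iterate_succ_apply', pow_succ', mul_assoc]
    calc supNorm E (derivative (derivative^[k] P))
        ≤ M * ((derivative^[k] P).natDegree : ℝ) ^ m * supNorm E (derivative^[k] P) := h _
      _ ≤ M * (n : ℝ) ^ m * ((M * (n : ℝ) ^ m) ^ k * supNorm E P) := by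
        gcongr
        exact supNorm_nonneg E _

lemma norm_eval_add_le (h : HasMarkovInequality E M m) (hE : IsCompact E) (hM : 0 ≤ M)
    (hm : 0 ≤ m) {P : ℂ[X]} {n : ℕ} (hP : P.natDegree ≤ n) {z : ℂ} (hz : z ∈ E) (ζ : ℂ) :
    ‖P.eval (z + ζ)‖ ≤ supNorm E P * exp (M * (n : ℝ) ^ m * ‖ζ‖) :=
  norm_eval_add_le_mul_exp P (by positivity) (fun k ↦ (norm_eval_le_supNorm hE _ hz).trans
    ((h.supNorm_iterate_derivative_le hM hm hP k).trans_eq (mul_comm _ _))) ζ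

lemma phi_one_le (h : HasMarkovInequality E M m) (hE : IsCompact E) (hM : 0 ≤ M) (hm : 1 ≤ m)
    {n : ℕ} (hn : 1 ≤ n) : phi E n 1 ≤ exp (M * n) * ((n : ℝ) ^ (m - 1)) ^ n := by
  have hn0 : (0 : ℝ) < n := by exact_mod_cast hn
  have hr : 0 < ((n : ℝ) ^ (m - 1))⁻¹ := by positivity
  have hr1 : ((n : ℝ) ^ (m - 1))⁻¹ ≤ 1 :=
    inv_le_one_of_one_le₀ (one_le_rpow (by exact_mod_cast hn) (by linarith))
  refine Real.sSup_le ?_ (by positivity)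
  rintro _ ⟨P, z, ζ, hz, hζ, hP, hP1, rfl⟩
  have hsmall : ∀ w : ℂ, ‖w‖ ≤ ((n : ℝ) ^ (m - 1))⁻¹ → ‖(taylor z P).eval w‖ ≤ exp (M * n) := by
    intro w hw
    rw [taylor_eval, add_comm]
    calc ‖P.eval (z + w)‖ ≤ supNorm E P * exp (M * (n : ℝ) ^ m * ‖w‖) :=
          h.norm_eval_add_le hE hM (by linarith) hP hz w
      _ ≤ 1 * exp (M * (n : ℝ) ^ m * ((n : ℝ) ^ (m - 1))⁻¹) := by
          gcongr
      _ = exp (M * n) := by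
          rw [one_mul, rpow_sub_one hn0.ne']
          field_simp
  have := norm_eval_le_mul_div_pow ((natDegree_taylor P z).trans_le hP) hr hr1 hsmall hζ
  rwa [taylor_eval, add_comm, one_div, inv_inv] at this

end HasMarkovInequality

theorem stmt8_general (E : Set ℂ) (hE : IsCompact E)
    (M m : ℝ) (hM : 0 < M) (hm : 1 ≤ m)
    (hAM : ∀ P : Polynomial ℂ, supNorm E (Polynomial.derivative P) ≤
      M * (P.natDegree : ℝ) ^ m * supNorm E P)
    (n : ℕ) (hn : 2 ≤ n) :
    (1 / (n : ℝ)) * Real.log (phi E n 1) ≤ M + (m - 1) * Real.log n := by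
  have hn0 : (0 : ℝ) < n := by positivity
  have hbound := HasMarkovInequality.phi_one_le hAM hE hM.le hm (n := n) (by omega)
  have hB : 1 ≤ exp (M * n) * ((n : ℝ) ^ (m - 1)) ^ n :=
    one_le_mul_of_one_le_of_one_le (one_le_exp (by positivity))
      (one_le_pow₀ (one_le_rpow (by exact_mod_cast (by omega : 1 ≤ n)) (by linarith)))
  have hlog : log (phi E n 1) ≤ log (exp (M * n) * ((n : ℝ) ^ (m - 1)) ^ n) := by
    rcases (phi_nonneg E n 1).eq_or_lt with h0 | hpos
    · rw [← h0, log_zero]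
      exact log_nonneg hB
    · exact log_le_log hpos hbound
  calc 1 / (n : ℝ) * log (phi E n 1)
      ≤ 1 / n * log (exp (M * n) * ((n : ℝ) ^ (m - 1)) ^ n) := by gcongr
    _ = M + (m - 1) * log n := by
      rw [log_mul (exp_pos _).ne' (by positivity), log_exp, log_pow, log_rpow hn0]
      field_simp

/-- if `E ∈ 𝒜ℳ(M,m)`, i.e. `‖P'‖_E ≤ M (deg P)^m ‖P‖_E` for all `P`,
then for every `n ≥ 2`, `v_n(E,1) = (1/n) log φ_n(E,1) ≤ M + (m-1) log n`. -/
theorem stmt8 (E : Set ℂ) (hE : IsCompact E) (hEne : E.Nonempty)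
    (M m : ℝ) (hM : 0 < M) (hm : 1 ≤ m)
    (hAM : ∀ P : Polynomial ℂ, supNorm E (Polynomial.derivative P) ≤
      M * (P.natDegree : ℝ) ^ m * supNorm E P)
    (n : ℕ) (hn : 2 ≤ n) :
    (1 / (n : ℝ)) * Real.log (phi E n 1) ≤ M + (m - 1) * Real.log n :=
  stmt8_general E hE M m hM hm hAM n hn
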